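/- arXiv:2408.01477 — 2 statements merged into one kernel-verified Lean document; each statement's English description precedes it below -/
import Mathlib

section
/- Let n > k > d ≥ 0 be integers satisfying (k+1)(n−k) + 2 ≤ C(k,0) + C(k,1) + ··· + C(k, k−d−1). Then there exists a Boolean function f : F_2^n → F_2 such that for every k-dimensional flat A of F_2^n, the restriction of f to A has algebraic degree strictly greater than d. Equivalently, g(n,k) > d. -/
/-!
Union bound. Double counting pairs (ordered basis, base point) shows that there are fewer than
`2 ^ ((k+1)(n-k)+2)` flats of dimension `k`. Parametrizing a `k`-flat affinely by `𝔽₂ᵏ`, the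
sums of `f` over the coordinate subcubes are the coefficients of the algebraic normal form of
the restriction; if `f` has degree `≤ d` on the flat, the parity criterion kills those of the
`∑_{i < k-d} C(k,i)` subcubes of dimension `> d`, so such `f` form at most a
`2 ^ (-∑_{i < k-d} C(k,i))` fraction of all functions. The hypothesis makes the union over all
`k`-flats a proper subset.
-/

open scoped Classical

noncomputable section

/-- Boolean functions in `n` variables. -/
abbrev BF (n : ℕ) := (Fin n → ZMod 2) → ZMod 2

/-- `A` is a `k`-dimensional flat (coset of a `k`-dimensional linear subspace) of `𝔽₂ⁿ`. -/
def IsFlat {n : ℕ} (A : Set (Fin n → ZMod 2)) (k : ℕ) : Prop :=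
  ∃ (W : Submodule (ZMod 2) (Fin n → ZMod 2)) (v : Fin n → ZMod 2),
    Module.finrank (ZMod 2) W = k ∧ A = (fun w => v + w) '' (W : Set (Fin n → ZMod 2))

/-- The sum (parity) of `f` over a subset of `𝔽₂ⁿ`. -/
def flatSum {n : ℕ} (f : BF n) (A : Set (Fin n → ZMod 2)) : ZMod 2 :=
  ∑ x ∈ A.toFinite.toFinset, f x

/-- The restriction of `f` to `A` has algebraic degree at most `d`:
by the standard parity criterion, this holds iff the sum of `f` over every
`(d+1)`-dimensional flat contained in `A` vanishes. -/
def DegLE {n : ℕ} (f : BF n) (A : Set (Fin n → ZMod 2)) (d : ℕ) : Prop :=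
  ∀ B : Set (Fin n → ZMod 2), IsFlat B (d + 1) → B ⊆ A → flatSum f B = 0

/-- The algebraic degree of the restriction of `f` to `A`. -/
def degOn {n : ℕ} (f : BF n) (A : Set (Fin n → ZMod 2)) : ℕ :=
  sInf {d | DegLE f A d}

/-- `α(f, k)`: the minimal algebraic degree of `f` restricted to a `k`-dimensional flat. -/
def alphaDeg {n : ℕ} (f : BF n) (k : ℕ) : ℕ :=
  sInf {d | ∃ A, IsFlat A k ∧ degOn f A = d}

/-- `g(n, k) = max_f α(f, k)`. -/
def gdeg (n k : ℕ) : ℕ :=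
  sSup {m | ∃ f : BF n, alphaDeg f k = m}

/-- The nonlinearity of the restriction of `f` to `A`: the minimal Hamming distance,
on `A`, from `f` to an affine function. -/
def nlOn {n : ℕ} (f : BF n) (A : Set (Fin n → ZMod 2)) : ℕ :=
  sInf {m | ∃ (a : Fin n → ZMod 2) (c : ZMod 2),
    m = (A.toFinite.toFinset.filter (fun x => f x ≠ (∑ i, a i * x i) + c)).card}

section
open Finset

variable {n k m : ℕ}

theorem IsFlat.exists_affine_param {A : Set (Fin n → ZMod 2)} (hA : IsFlat A k) :
    ∃ (v : Fin n → ZMod 2) (L : (Fin k → ZMod 2) →ₗ[ZMod 2] (Fin n → ZMod 2)),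
      Function.Injective L ∧ A = Set.range fun x => v + L x := by
  obtain ⟨W, v, hW, rfl⟩ := hA
  let e : (Fin k → ZMod 2) ≃ₗ[ZMod 2] W := LinearEquiv.ofFinrankEq _ _ (by simp [hW])
  refine ⟨v, W.subtype ∘ₗ e.toLinearMap, W.injective_subtype.comp e.injective, ?_⟩
  have hrange : Set.range (W.subtype ∘ₗ e.toLinearMap) = W := by
    simp [Set.range_comp, e.surjective.range_eq]
  rw [← hrange, ← Set.range_comp]
  rfl

theorem IsFlat.image_affine {S : Set (Fin k → ZMod 2)} (hS : IsFlat S m) (v : Fin n → ZMod 2)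
    {L : (Fin k → ZMod 2) →ₗ[ZMod 2] (Fin n → ZMod 2)} (hL : Function.Injective L) :
    IsFlat ((fun x => v + L x) '' S) m := by
  obtain ⟨U, u, hU, rfl⟩ := hS
  refine ⟨U.map L, v + L u, ?_, ?_⟩
  · rw [← hU]; exact (Submodule.equivMapOfInjective L hL U).finrank_eq.symm
  · simp only [Submodule.map_coe, Set.image_image, map_add, add_assoc]

theorem IsFlat.dim_le {A B : Set (Fin n → ZMod 2)} (hA : IsFlat A k) (hB : IsFlat B m)
    (hBA : B ⊆ A) : m ≤ k := by
  obtain ⟨W, v, rfl, rfl⟩ := hA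
  obtain ⟨W', v', rfl, rfl⟩ := hB
  refine Submodule.finrank_mono fun u hu => ?_
  obtain ⟨w₁, hw₁, he₁⟩ := hBA ⟨u, hu, rfl⟩
  obtain ⟨w₂, hw₂, he₂⟩ := hBA ⟨0, W'.zero_mem, rfl⟩
  have : u = w₁ - w₂ := by linear_combination he₂ - he₁
  exact this ▸ W.sub_mem hw₁ hw₂

def cube (T : Finset (Fin k)) : Submodule (ZMod 2) (Fin k → ZMod 2) :=
  Submodule.span (ZMod 2) (Pi.basisFun (ZMod 2) (Fin k) '' T)

theorem mem_cube {T : Finset (Fin k)} {x : Fin k → ZMod 2} :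
    x ∈ cube T ↔ ∀ i ∉ T, x i = 0 := by
  rw [cube, Module.Basis.mem_span_image]
  simp [Set.subset_def, not_imp_comm]

theorem finrank_cube (T : Finset (Fin k)) : Module.finrank (ZMod 2) (cube T) = #T := by
  have := finrank_span_eq_card ((Pi.basisFun (ZMod 2) (Fin k)).linearIndependent.comp _
    (Subtype.val_injective (p := (· ∈ T))))
  rw [Set.range_comp, Subtype.range_coe_subtype, Fintype.card_coe] at this
  exact this

theorem isFlat_cube (T : Finset (Fin k)) : IsFlat (cube T : Set (Fin k → ZMod 2)) #T :=
  ⟨cube T, 0, finrank_cube T, by simp⟩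

theorem flatSum_image {f : BF n} {ι : (Fin k → ZMod 2) → (Fin n → ZMod 2)}
    (hι : Function.Injective ι) (S : Set (Fin k → ZMod 2)) :
    flatSum f (ι '' S) = flatSum (f ∘ ι) S := by
  have : (ι '' S).toFinite.toFinset = S.toFinite.toFinset.image ι := by ext; simp
  rw [flatSum, flatSum, this, sum_image fun x _ y _ h => hι h]
  rfl

theorem support_injective_zmod_two {ι : Type*} :
    Function.Injective (Function.support : (ι → ZMod 2) → Set ι) := by
  intro x y h
  funext i
  have := Set.ext_iff.1 h i
  simp only [Function.mem_support] at this
  revert this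
  generalize x i = a
  generalize y i = b
  decide +revert

/-- The flat sums over the coordinate cubes are the coefficients of the algebraic normal form,
so they determine the function (Möbius inversion on the Boolean lattice). -/
theorem eq_zero_of_flatSum_cube_eq_zero {g : BF k}
    (h : ∀ T : Finset (Fin k), flatSum g ↑(cube T) = 0) : g = 0 := by
  suffices ∀ T : Finset (Fin k), ∀ x, (Function.support x).toFinset = T → g x = 0 from
    funext fun x => this _ x rfl
  intro T
  induction T using strongInduction with
  | H T ih =>
    intro x hx
    have hxT : x ∈ (cube T : Set (Fin k → ZMod 2)).toFinite.toFinset := by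
      simp [mem_cube, ← hx]
    have hsum := h T
    rw [flatSum, ← add_sum_erase _ _ hxT, sum_eq_zero, add_zero] at hsum
    · exact hsum
    intro y hy
    obtain ⟨hyx, hyT⟩ := mem_erase.1 hy
    refine ih _ (Finset.ssubset_iff_subset_ne.2 ⟨?_, ?_⟩) y rfl
    · intro i hi
      by_contra hiT
      simp_all [mem_cube]
    · intro hT
      rw [← hx, Set.toFinset_inj] at hT
      exact hyx (support_injective_zmod_two hT)

theorem eq_of_flatSum_cube_eq {g g' : BF k}
    (h : ∀ T : Finset (Fin k), flatSum g ↑(cube T) = flatSum g' ↑(cube T)) : g = g' := by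
  refine sub_eq_zero.1 (eq_zero_of_flatSum_cube_eq_zero fun T => ?_)
  have := h T
  simp only [flatSum, Pi.sub_apply, sum_sub_distrib] at this ⊢
  rw [this, sub_self]

theorem isFlat_setOf_apply_zero_eq (a : ZMod 2) :
    IsFlat {x : Fin (m + 1) → ZMod 2 | x 0 = a} m := by
  refine ⟨cube (univ.erase 0), Pi.single 0 a, by simp [finrank_cube], ?_⟩
  ext x
  constructor
  · intro (hx : x 0 = a)
    refine ⟨x - Pi.single 0 a, mem_cube.2 fun i hi => ?_, by simp⟩
    obtain rfl : i = 0 := by simpa using hi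
    simp [hx]
  · rintro ⟨w, hw, rfl⟩
    simp [mem_cube.1 hw 0 (by simp)]

variable {f : BF n} {A : Set (Fin n → ZMod 2)} {d e : ℕ}

theorem DegLE.succ (h : DegLE f A e) : DegLE f A (e + 1) := by
  intro B hB hBA
  obtain ⟨v, L, hL, rfl⟩ := hB.exists_affine_param
  have hι : Function.Injective fun x => v + L x := (add_right_injective v).comp hL
  -- an `(e+2)`-flat is the disjoint union of two parallel `(e+1)`-flats
  rw [← Set.image_univ, flatSum_image hι, flatSum, ← sum_fiberwise _ (fun x => x 0)]
  refine sum_eq_zero fun a _ => ?_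
  have := h _ ((isFlat_setOf_apply_zero_eq a).image_affine v hL)
    (hBA.trans' (Set.image_subset_range _ _))
  rw [flatSum_image hι, flatSum] at this
  convert this using 2
  ext
  simp

theorem DegLE.mono (h : DegLE f A d) (hde : d ≤ e) : DegLE f A e := by
  induction e, hde using Nat.le_induction with
  | base => exact h
  | succ e _ ih => exact ih.succ

theorem IsFlat.degLE (hA : IsFlat A k) : DegLE f A k :=
  fun _ hB hBA => absurd (hA.dim_le hB hBA) (by omega)

theorem IsFlat.lt_degOn (hA : IsFlat A k) (hf : ¬DegLE f A d) : d < degOn f A := by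
  by_contra! hle
  have : DegLE f A (degOn f A) := Nat.sInf_mem (s := {d | DegLE f A d}) ⟨k, hA.degLE⟩
  exact hf (this.mono hle)

theorem DegLE.flatSum_comp_cube_eq_zero {v : Fin n → ZMod 2}
    {L : (Fin k → ZMod 2) →ₗ[ZMod 2] (Fin n → ZMod 2)}
    (hf : DegLE f (Set.range fun x => v + L x) d) (hL : Function.Injective L)
    {T : Finset (Fin k)} (hT : d < #T) : flatSum (f ∘ fun x => v + L x) ↑(cube T) = 0 := by
  have hι : Function.Injective fun x => v + L x := (add_right_injective v).comp hL
  rw [← flatSum_image hι]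
  refine (hf.mono (Nat.le_pred_of_lt hT)) _ ?_ (Set.image_subset_range _ _)
  rw [Nat.pred_eq_sub_one, Nat.sub_add_cancel (by omega)]
  exact (isFlat_cube T).image_affine v hL

theorem IsFlat.card_degLE_mul_le (hA : IsFlat A k) :
    #{f : BF n | DegLE f A d} * 2 ^ #{T : Finset (Fin k) | d < #T} ≤ 2 ^ 2 ^ n := by
  obtain ⟨v, L, hL, rfl⟩ := hA.exists_affine_param
  set ι := fun x => v + L x
  have hι : Function.Injective ι := (add_right_injective v).comp hL
  -- a function of degree `≤ d` on the flat is determined by its small coefficients there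
  -- together with its values off the flat
  let Φ : {f : BF n // DegLE f (Set.range ι) d} →
      ({T : Finset (Fin k) // ¬d < #T} → ZMod 2) × ({y // y ∉ Set.range ι} → ZMod 2) :=
    fun f => (fun T => flatSum (f.1 ∘ ι) ↑(cube T.1), fun y => f.1 y)
  have hΦ : Function.Injective Φ := by
    rintro ⟨f, hf⟩ ⟨f', hf'⟩ hff'
    simp only [Φ, Prod.mk.injEq, funext_iff, Subtype.forall] at hff'
    have hcomp : f ∘ ι = f' ∘ ι := eq_of_flatSum_cube_eq fun T => by
      by_cases hT : d < #T
      · rw [hf.flatSum_comp_cube_eq_zero hL hT, hf'.flatSum_comp_cube_eq_zero hL hT]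
      · exact hff'.1 T hT
    refine Subtype.ext (funext fun y => ?_)
    by_cases hy : y ∈ Set.range ι
    · obtain ⟨x, rfl⟩ := hy
      exact congrFun hcomp x
    · exact hff'.2 y hy
  have hcard := Fintype.card_le_of_injective Φ hΦ
  simp only [Fintype.card_subtype, Fintype.card_prod, Fintype.card_fun, ZMod.card] at hcard
  have hcoeffs : #{T : Finset (Fin k) | ¬d < #T} + #{T : Finset (Fin k) | d < #T} = 2 ^ k := by
    rw [add_comm, card_filter_add_card_filter_not, card_univ, Fintype.card_finset,
      Fintype.card_fin]
  have hpoints : #{y | y ∉ Set.range ι} + 2 ^ k = 2 ^ n := by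
    have hrange : #{y | y ∈ Set.range ι} = 2 ^ k := by
      rw [← Fintype.card_subtype, Set.card_range_of_injective hι]
      simp
    rw [← hrange, add_comm, card_filter_add_card_filter_not, card_univ]
    simp
  calc _ ≤ 2 ^ #{T : Finset (Fin k) | ¬d < #T} * 2 ^ #{y | y ∉ Set.range ι} *
        2 ^ #{T : Finset (Fin k) | d < #T} := Nat.mul_le_mul_right _ hcard
    _ = 2 ^ 2 ^ n := by rw [← pow_add, ← pow_add, ← hpoints, ← hcoeffs]; ring_nf

theorem card_filter_lt_card_finset (d k : ℕ) :
    #{T : Finset (Fin k) | d < #T} = ∑ i ∈ range (k - d), k.choose i := by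
  have hle (T : Finset (Fin k)) : #T ≤ k := by simpa using card_le_univ T
  calc #{T : Finset (Fin k) | d < #T} = #{T : Finset (Fin k) | #T ∈ range (k - d)} := by
        refine card_nbij' compl compl (fun T hT => ?_) (fun T hT => ?_) (fun T _ => compl_compl T)
          (fun T _ => compl_compl T) <;>
        · have := hle T
          simp only [coe_filter, Set.mem_ofPred_eq, mem_univ, true_and, mem_range, card_compl,
            Fintype.card_fin] at hT ⊢
          omega
    _ = ∑ i ∈ range (k - d), k.choose i := by
        rw [← sum_card_fiberwise_eq_card_filter]
        simp

theorem quarter_lt_prod_one_sub_half_pow (k : ℕ) :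
    (1 / 4 : ℚ) < ∏ j ∈ range k, (1 - (1 / 2) ^ (j + 1)) := by
  -- the strengthened bound `1/4 + 2^-(k+2) ≤ ∏_{j ≤ k}` survives the induction step
  have key (k : ℕ) :
      1 / 4 + (1 / 2 : ℚ) ^ (k + 2) ≤ ∏ j ∈ range (k + 1), (1 - (1 / 2) ^ (j + 1)) := by
    induction k with
    | zero => norm_num
    | succ k ih =>
      rw [prod_range_succ]
      have ht : (1 / 2 : ℚ) ^ (k + 2) ≤ 1 / 4 := by
        calc (1 / 2 : ℚ) ^ (k + 2) ≤ (1 / 2) ^ 2 :=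
              pow_le_pow_of_le_one (by norm_num) (by norm_num) (by omega)
          _ = 1 / 4 := by norm_num
      have hpos : (0 : ℚ) < (1 / 2) ^ (k + 2) := by positivity
      rw [pow_succ]
      nlinarith
  cases k with
  | zero => norm_num
  | succ k => exact (lt_add_of_pos_right _ (by positivity)).trans_le (key k)

theorem pow_mul_self_lt_four_mul_prod (k : ℕ) :
    2 ^ (k * k) < 4 * ∏ i : Fin k, (2 ^ k - 2 ^ (i : ℕ)) := by
  have hcast : ((∏ i : Fin k, (2 ^ k - 2 ^ (i : ℕ)) : ℕ) : ℚ) =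
      2 ^ (k * k) * ∏ j ∈ range k, (1 - (1 / 2) ^ (j + 1)) := by
    calc _ = ∏ i ∈ range k, ((2 : ℚ) ^ k * (1 - (1 / 2) ^ (k - 1 - i + 1))) := by
          rw [Fin.prod_univ_eq_prod_range (fun i => 2 ^ k - 2 ^ i), Nat.cast_prod]
          refine prod_congr rfl fun i hi => ?_
          obtain ⟨j, rfl⟩ := Nat.exists_eq_add_of_lt (mem_range.1 hi)
          rw [show i + j + 1 - 1 - i + 1 = j + 1 by omega, Nat.cast_sub (by gcongr <;> omega)]
          push_cast
          rw [div_pow, one_pow]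
          field_simp
          ring
      _ = _ := by
          rw [prod_mul_distrib, prod_const, card_range, ← pow_mul,
            prod_range_reflect (fun j => 1 - (1 / 2 : ℚ) ^ (j + 1))]
  rw [← Nat.cast_lt (α := ℚ), Nat.cast_mul, hcast]
  have := quarter_lt_prod_one_sub_half_pow k
  have : (0 : ℚ) < 2 ^ (k * k) := by positivity
  push_cast
  nlinarith

theorem IsFlat.prod_mul_two_pow_le_card_fiber (hA : IsFlat A k) :
    (∏ i : Fin k, (2 ^ k - 2 ^ (i : ℕ))) * 2 ^ k ≤
      #{p : (Fin k → Fin n → ZMod 2) × (Fin n → ZMod 2) |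
        (fun w => p.2 + w) '' (Submodule.span (ZMod 2) (Set.range p.1) : Set _) = A} := by
  obtain ⟨W, v, hW, rfl⟩ := hA
  -- each (ordered basis of `W`, point of the flat) is a parametrization of the flat
  let D := {s : Fin k → W // LinearIndependent (ZMod 2) s} × W
  have hD : Fintype.card D = (∏ i : Fin k, (2 ^ k - 2 ^ (i : ℕ))) * 2 ^ k := by
    rw [Fintype.card_prod, ← Nat.card_eq_fintype_card, card_linearIndependent hW.ge,
      Module.card_eq_pow_finrank (K := ZMod 2) (V := W)]
    simp [hW]
  rw [← hD, ← card_univ]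
  refine card_le_card_of_injOn (fun q => (fun i => (q.1.1 i : Fin n → ZMod 2), v + q.2))
    (fun q _ => ?_) (fun q _ q' _ h => ?_)
  · obtain ⟨⟨s, hs⟩, w⟩ := q
    have hspan : Submodule.span (ZMod 2) (Set.range fun i => (s i : Fin n → ZMod 2)) = W := by
      change Submodule.span _ (Set.range (W.subtype ∘ s)) = W
      rw [Set.range_comp, Submodule.span_image,
        hs.span_eq_top_of_card_eq_finrank' (by simp [hW]), Submodule.map_top,
        Submodule.range_subtype]
    simp only [coe_filter, mem_univ, true_and, Set.mem_ofPred_eq, hspan]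
    ext u
    constructor
    · rintro ⟨x, hx, rfl⟩
      exact ⟨w + x, W.add_mem w.2 hx, by simp [add_assoc]⟩
    · rintro ⟨x, hx, rfl⟩
      exact ⟨x - w, W.sub_mem hx w.2, by simp [add_assoc]⟩
  · obtain ⟨h₁, h₂⟩ := Prod.mk.inj h
    ext1
    · exact Subtype.ext (funext fun i => Subtype.ext (congrFun h₁ i))
    · exact Subtype.ext (add_left_cancel h₂)

theorem card_isFlat_lt (hkn : k ≤ n) :
    #{A : Set (Fin n → ZMod 2) | IsFlat A k} < 2 ^ ((k + 1) * (n - k) + 2) := by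
  set N := ∏ i : Fin k, (2 ^ k - 2 ^ (i : ℕ))
  set F := #{A : Set (Fin n → ZMod 2) | IsFlat A k}
  have hcount : F * (N * 2 ^ k) ≤ 2 ^ (n * k + n) := by
    calc F * (N * 2 ^ k) = ∑ A : Set (Fin n → ZMod 2) with IsFlat A k, N * 2 ^ k := by
          rw [sum_const, smul_eq_mul]
      _ ≤ _ := sum_le_sum fun A hA => (mem_filter.1 hA).2.prod_mul_two_pow_le_card_fiber
      _ = _ := sum_card_fiberwise_eq_card_filter _ _ _
      _ ≤ Fintype.card ((Fin k → Fin n → ZMod 2) × (Fin n → ZMod 2)) := card_le_univ _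
      _ = 2 ^ (n * k + n) := by simp [ZMod.card, pow_mul, pow_add, mul_comm]
  obtain ⟨m, rfl⟩ := Nat.exists_eq_add_of_le hkn
  by_contra! hF
  rw [Nat.add_sub_cancel_left] at hF
  have hlt : 2 ^ ((k + 1) * m + 2) * 2 ^ (k * k) < F * (4 * N) :=
    Nat.mul_lt_mul_of_le_of_lt hF (pow_mul_self_lt_four_mul_prod k)
      (hF.trans_lt' (by positivity))
  have : 4 * 2 ^ ((k + m) * k + (k + m)) < 4 * 2 ^ ((k + m) * k + (k + m)) :=
    calc 4 * 2 ^ ((k + m) * k + (k + m)) = 2 ^ ((k + 1) * m + 2) * 2 ^ (k * k) * 2 ^ k := by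
          ring
      _ < F * (4 * N) * 2 ^ k := Nat.mul_lt_mul_of_pos_right hlt (by positivity)
      _ = 4 * (F * (N * 2 ^ k)) := by ring
      _ ≤ 4 * 2 ^ ((k + m) * k + (k + m)) := by gcongr
  exact lt_irrefl _ this

theorem exists_forall_isFlat_not_degLE
    (h : #{A : Set (Fin n → ZMod 2) | IsFlat A k} < 2 ^ #{T : Finset (Fin k) | d < #T}) :
    ∃ f : BF n, ∀ A, IsFlat A k → ¬DegLE f A d := by
  set b := #{T : Finset (Fin k) | d < #T}
  let Flats := ({A | IsFlat A k} : Finset (Set (Fin n → ZMod 2)))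
  let Bad := Flats.biUnion fun A => ({f | DegLE f A d} : Finset (BF n))
  have hBad : #Bad * 2 ^ b < #(univ : Finset (BF n)) * 2 ^ b :=
    calc #Bad * 2 ^ b ≤ ∑ A ∈ Flats, #{f : BF n | DegLE f A d} * 2 ^ b := by
          rw [← sum_mul]; gcongr; exact card_biUnion_le
      _ ≤ ∑ _A ∈ Flats, 2 ^ 2 ^ n :=
          sum_le_sum fun A hA => (mem_filter.1 hA).2.card_degLE_mul_le
      _ = #Flats * 2 ^ 2 ^ n := by rw [sum_const, smul_eq_mul]
      _ < 2 ^ b * 2 ^ 2 ^ n := by gcongr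
      _ = #(univ : Finset (BF n)) * 2 ^ b := by simp [ZMod.card, mul_comm]
  obtain ⟨f, -, hf⟩ := exists_mem_notMem_of_card_lt_card (lt_of_mul_lt_mul_right' hBad)
  exact ⟨f, fun A hA hfA =>
    hf (mem_biUnion.2 ⟨A, by simpa [Flats] using hA, by simpa using hfA⟩)⟩

theorem exists_isFlat (hkn : k ≤ n) : ∃ A : Set (Fin n → ZMod 2), IsFlat A k := by
  obtain ⟨T, -, hT⟩ := exists_subset_card_eq (s := (univ : Finset (Fin n))) (by simpa using hkn)
  exact ⟨_, hT ▸ isFlat_cube T⟩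

theorem IsFlat.degOn_le (hA : IsFlat A k) : degOn f A ≤ k :=
  Nat.sInf_le (s := {d | DegLE f A d}) hA.degLE

theorem IsFlat.alphaDeg_le_degOn (hA : IsFlat A k) : alphaDeg f k ≤ degOn f A :=
  Nat.sInf_le (s := {d | ∃ A, IsFlat A k ∧ degOn f A = d}) ⟨A, hA, rfl⟩

theorem lt_alphaDeg (hA : IsFlat A k) (h : ∀ B, IsFlat B k → d < degOn f B) :
    d < alphaDeg f k :=
  le_csInf (s := {d | ∃ A, IsFlat A k ∧ degOn f A = d}) ⟨_, A, hA, rfl⟩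
    fun _ ⟨B, hB, hBm⟩ => hBm ▸ h B hB

end

theorem stmt11_general {n k d : ℕ} (hkn : k < n)
    (h : (k + 1) * (n - k) + 2 ≤ ∑ i ∈ Finset.range (k - d), Nat.choose k i) :
    (∃ f : BF n, ∀ A : Set (Fin n → ZMod 2), IsFlat A k → d < degOn f A) ∧
    d < gdeg n k := by
  have hbound := Nat.pow_le_pow_right two_pos (card_filter_lt_card_finset d k ▸ h)
  obtain ⟨f, hf⟩ := exists_forall_isFlat_not_degLE ((card_isFlat_lt hkn.le).trans_le hbound)
  have hdeg : ∀ A, IsFlat A k → d < degOn f A := fun A hA => hA.lt_degOn (hf A hA)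
  refine ⟨⟨f, hdeg⟩, ?_⟩
  obtain ⟨A, hA⟩ := exists_isFlat hkn.le
  have hbdd : BddAbove {m | ∃ g : BF n, alphaDeg g k = m} :=
    ⟨k, fun _ ⟨g, hg⟩ => hg ▸ hA.alphaDeg_le_degOn.trans hA.degOn_le⟩
  exact (lt_alphaDeg hA hdeg).trans_le (le_csSup hbdd ⟨f, rfl⟩)

/-- If `n > k > d ≥ 0` and `(k+1)(n-k) + 2 ≤ ∑_{i=0}^{k-d-1} C(k,i)`, then some
Boolean function on `𝔽₂ⁿ` has degree `> d` on every `k`-dimensional flat,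
i.e. `g(n,k) > d`. -/
theorem stmt11 {n k d : ℕ} (hdk : d < k) (hkn : k < n)
    (h : (k + 1) * (n - k) + 2 ≤ ∑ i ∈ Finset.range (k - d), Nat.choose k i) :
    (∃ f : BF n, ∀ A : Set (Fin n → ZMod 2), IsFlat A k → d < degOn f A) ∧
    d < gdeg n k :=
  stmt11_general hkn h
end
end

section
/- Let k > d ≥ 0 be integers and n ≥ 2^{k−1} + k − ⌊2^{d−1}⌋. Then for every Boolean function f : F_2^n → F_2 there exists a k-dimensional flat of F_2^n on which the restriction of f has algebraic degree at most d; i.e., g(n,k) ≤ d. -/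
open scoped Classical

noncomputable section

/-!
Greedy doubling. Keep a subspace `W` and a set `S` that is a union of `W`-cosets on each of which
`f` is constant. Counting the pairs `(x, x + b)` in `S` with `f x = f (x + b)` over all `b` gives
`∑_γ |S_γ|² ≥ |S|² / 2` of them, so some `b ∉ W` keeps about `|S|² / 2ⁿ⁺¹` such `x`; these form a
union of `(W + ⟨b⟩)`-cosets on which `f` is constant. Do this up to dimension `k - d`, then continue
inside the resulting set without asking for constancy of `f` (so the density only squares) up to
dimension `k`. This gives a `k`-flat `x₀ + W` on which `f` is invariant under a subspace `V` of
dimension `k - d`. The direction space of every `(d + 1)`-flat inside meets `V`, and pairing `x`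
with `x + v` for such a common `v ≠ 0` shows that `f` sums to zero on the flat.
-/

open Module Finset Submodule

theorem sq_card_le_two_mul_sum_sq {α : Type*} (c : α → ZMod 2) (S : Finset α) :
    #S ^ 2 ≤ 2 * ∑ γ, #{x ∈ S | c x = γ} ^ 2 := by
  rw [card_eq_sum_card_fiberwise fun x _ => mem_univ (c x)]
  exact sq_sum_le_card_mul_sum_sq

theorem sum_sq_card_filter_zero {α : Type*} (S : Finset α) :
    ∑ γ : ZMod 2, #{x ∈ S | (0 : α → ZMod 2) x = γ} ^ 2 = #S ^ 2 := by
  rw [Fintype.sum_eq_single 0 fun γ hγ => by simp [Ne.symm hγ]]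
  simp

theorem sub_one_mul_add_lt {s σ P Q E T N : ℕ} (hs : P ≤ s) (hsq : s ^ 2 ≤ E * σ)
    (hQE : Q * E ≤ P) (hPQ : P * Q ≤ N) (hT : T * E * N ≤ P ^ 2) (hT2 : 2 ≤ T) (hQ : 1 ≤ Q)
    (hE : 1 ≤ E) : (T - 1) * N + Q * s < σ + (T - 1) * Q := by
  obtain ⟨t, rfl⟩ : ∃ t, T = t + 1 := ⟨T - 1, by omega⟩
  rw [Nat.add_sub_cancel]
  have hmono : P * (P - Q * E) ≤ s * (s - Q * E) := Nat.mul_le_mul hs (by omega)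
  have hmain : E * (t * N + Q * s) ≤ s ^ 2 := by
    have h₁ : E * (P * Q) ≤ E * N := Nat.mul_le_mul_left E hPQ
    have h₂ : s * (s - Q * E) + s * (Q * E) = s ^ 2 := by
      rw [← mul_add, Nat.sub_add_cancel (hQE.trans hs), sq]
    have h₃ : P * (P - Q * E) + P * (Q * E) = P ^ 2 := by
      rw [← mul_add, Nat.sub_add_cancel hQE, sq]
    nlinarith
  have hpos : 0 < E * (t * Q) := Nat.mul_pos (by omega) (Nat.mul_pos (by omega) (by omega))
  have : E * (t * N + Q * s) < E * (σ + t * Q) := by nlinarith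
  exact Nat.lt_of_mul_lt_mul_left this

section MonoCosets

variable {V : Type*} [AddCommGroup V]

def monoPairs (c : V → ZMod 2) (S : Finset V) (b : V) : Finset V :=
  {x ∈ S | x + b ∈ S ∧ c (x + b) = c x}

theorem sum_card_monoPairs [Fintype V] (c : V → ZMod 2) (S : Finset V) :
    ∑ b, #(monoPairs c S b) = ∑ γ, #{x ∈ S | c x = γ} ^ 2 := by
  calc ∑ b, #(monoPairs c S b)
      = ∑ x ∈ S, ∑ b, if x + b ∈ S ∧ c (x + b) = c x then 1 else 0 := by
        simp only [monoPairs, card_filter]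
        exact sum_comm
    _ = ∑ x ∈ S, #{y ∈ S | c y = c x} := by
        refine sum_congr rfl fun x _ => ?_
        calc (∑ b, if x + b ∈ S ∧ c (x + b) = c x then 1 else 0)
            = ∑ y, if y ∈ S ∧ c y = c x then 1 else 0 :=
              Equiv.sum_comp (Equiv.addLeft x) fun y => if y ∈ S ∧ c y = c x then 1 else 0
          _ = #{y ∈ S | c y = c x} := by
              rw [← card_filter, ← filter_filter, filter_mem_eq_inter, univ_inter]
    _ = ∑ γ, ∑ x ∈ S with c x = γ, #{y ∈ S | c y = γ} := by
        rw [← sum_fiberwise S c]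
        exact sum_congr rfl fun γ _ => sum_congr rfl fun x hx => by rw [(mem_filter.mp hx).2]
    _ = ∑ γ, #{x ∈ S | c x = γ} ^ 2 := by simp [sq]

variable [Module (ZMod 2) V]

def IsMonoCosetUnion (c : V → ZMod 2) (W : Submodule (ZMod 2) V) (S : Finset V) : Prop :=
  ∀ x ∈ S, ∀ w ∈ W, x + w ∈ S ∧ c (x + w) = c x

theorem IsMonoCosetUnion.zero {c : V → ZMod 2} {W : Submodule (ZMod 2) V} {S : Finset V}
    (h : IsMonoCosetUnion c W S) : IsMonoCosetUnion 0 W S :=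
  fun x hx w hw => ⟨(h x hx w hw).1, rfl⟩

theorem mem_sup_span_singleton_iff {W : Submodule (ZMod 2) V} {b z : V} :
    z ∈ W ⊔ span (ZMod 2) {b} ↔ z ∈ W ∨ z + b ∈ W := by
  constructor
  · intro hz
    obtain ⟨w, hw, t, ht, rfl⟩ := mem_sup.mp hz
    obtain ⟨a, rfl⟩ := mem_span_singleton.mp ht
    obtain rfl | rfl : a = 0 ∨ a = 1 := (by decide : ∀ a : ZMod 2, a = 0 ∨ a = 1) a
    · simpa using Or.inl hw
    · simpa [add_assoc, ZModModule.add_self] using Or.inr hw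
  · rintro (hz | hz)
    · exact mem_sup_left hz
    · rw [← add_zero z, ← ZModModule.add_self b, ← add_assoc]
      exact add_mem (mem_sup_left hz) (mem_sup_right (mem_span_singleton_self b))

theorem IsMonoCosetUnion.sup_span {c : V → ZMod 2} {W : Submodule (ZMod 2) V} {S : Finset V}
    (h : IsMonoCosetUnion c W S) (b : V) :
    IsMonoCosetUnion c (W ⊔ span (ZMod 2) {b}) (monoPairs c S b) := by
  intro x hx z hz
  simp only [monoPairs, mem_filter] at hx ⊢
  obtain ⟨hxS, hxbS, hxb⟩ := hx
  rcases mem_sup_span_singleton_iff.mp hz with hw | hw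
  · have h₁ := h x hxS z hw
    have h₂ := h (x + b) hxbS z hw
    rw [add_right_comm] at h₂
    exact ⟨⟨h₁.1, h₂.1, by rw [h₂.2, hxb, h₁.2]⟩, h₁.2⟩
  · have h₁ := h x hxS (z + b) hw
    have h₂ := h (x + b) hxbS (z + b) hw
    rw [← add_assoc] at h₁
    rw [add_add_add_comm, ZModModule.add_self, add_zero] at h₂
    exact ⟨⟨h₂.1, h₁.1, by rw [h₁.2, h₂.2, hxb]⟩, by rw [h₂.2, hxb]⟩

variable [Fintype V]

theorem card_eq_two_pow_finrank : Fintype.card V = 2 ^ finrank (ZMod 2) V := by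
  rw [card_eq_pow_finrank (K := ZMod 2) (V := V), ZMod.card]

theorem card_filter_mem_submodule (W : Submodule (ZMod 2) V) :
    #{b | b ∈ W} = 2 ^ finrank (ZMod 2) W := by
  rw [← Fintype.card_subtype, card_eq_two_pow_finrank]

theorem IsMonoCosetUnion.exists_card_monoPairs_gt {c : V → ZMod 2} {W : Submodule (ZMod 2) V}
    {S : Finset V} (h : IsMonoCosetUnion c W S) {t : ℕ}
    (ht : t * Fintype.card V + 2 ^ finrank (ZMod 2) W * #S <
      ∑ γ, #{x ∈ S | c x = γ} ^ 2 + t * 2 ^ finrank (ZMod 2) W) :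
    ∃ b ∉ W, t < #(monoPairs c S b) := by
  by_contra! hle
  have hmem : ∀ b ∈ W, #(monoPairs c S b) = #S := fun b hb =>
    congrArg card (filter_true_of_mem fun x hx => h x hx b hb)
  have hsplit := sum_filter_add_sum_filter_not univ (· ∈ W) fun b => #(monoPairs c S b)
  rw [sum_card_monoPairs, sum_congr rfl fun b hb => hmem b (mem_filter.mp hb).2, sum_const,
    card_filter_mem_submodule, smul_eq_mul] at hsplit
  have hout := sum_le_card_nsmul {b | b ∉ W} _ t fun b hb => hle b (mem_filter.mp hb).2
  have hcard := card_filter_add_card_filter_not (s := univ) (· ∈ W)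
  rw [card_filter_mem_submodule, card_univ] at hcard
  rw [smul_eq_mul] at hout
  have : t * Fintype.card V = t * #{b | b ∉ W} + t * 2 ^ finrank (ZMod 2) W := by
    rw [← hcard]; ring
  nlinarith

theorem two_pow_le_of_two_pow_add_le {p q s : ℕ} (h : 2 ^ (p + q) ≤ s * 2 ^ q) : 2 ^ p ≤ s := by
  rw [pow_add] at h
  exact Nat.le_of_mul_le_mul_right h (by positivity)

/-- With `n = finrank V` and `w = finrank W`, `hS` says `#S ≥ 2 ^ (n + a - 2 ^ w)`. One step
squares the density of `S` and divides it by `2 ^ e`, the loss that `hsq` allows for the colouring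
(`e = 1` for any colouring, `e = 0` for a constant one); so `a` becomes `2 * a - e`. -/
theorem IsMonoCosetUnion.exists_step {c : V → ZMod 2} {W : Submodule (ZMod 2) V} {S : Finset V}
    (h : IsMonoCosetUnion c W S) {e a : ℕ} (hea : e ≤ a)
    (hsq : #S ^ 2 ≤ 2 ^ e * ∑ γ, #{x ∈ S | c x = γ} ^ 2)
    (hS : 2 ^ a * Fintype.card V ≤ #S * 2 ^ 2 ^ finrank (ZMod 2) W)
    (h₁ : finrank (ZMod 2) W + e + 2 ^ finrank (ZMod 2) W ≤ finrank (ZMod 2) V + a)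
    (h₂ : a + finrank (ZMod 2) W ≤ 2 ^ finrank (ZMod 2) W)
    (h₃ : 2 ^ (finrank (ZMod 2) W + 1) + e < finrank (ZMod 2) V + 2 * a) :
    ∃ b ∉ W, 2 ^ (2 * a - e) * Fintype.card V ≤
      #(monoPairs c S b) * 2 ^ 2 ^ (finrank (ZMod 2) W + 1) := by
  obtain ⟨n, hn⟩ : ∃ n, finrank (ZMod 2) V = n := ⟨_, rfl⟩
  obtain ⟨w, hw⟩ : ∃ w, finrank (ZMod 2) W = w := ⟨_, rfl⟩
  rw [card_eq_two_pow_finrank, hn, hw, ← pow_add] at hS ⊢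
  rw [hn, hw] at h₁ h₃
  rw [hw] at h₂
  have hpow : 2 ^ (w + 1) = 2 * 2 ^ w := by ring
  obtain ⟨φ, hφ⟩ : ∃ φ, φ + 2 ^ w = a + n := ⟨a + n - 2 ^ w, by omega⟩
  obtain ⟨φ', hφ'⟩ : ∃ φ', φ' + 2 ^ (w + 1) = 2 * a - e + n :=
    ⟨2 * a - e + n - 2 ^ (w + 1), by omega⟩
  have hs : 2 ^ φ ≤ #S := two_pow_le_of_two_pow_add_le (by rwa [hφ])
  have hcount := sub_one_mul_add_lt (Q := 2 ^ w) (T := 2 ^ φ') (N := 2 ^ n) hs hsq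
    (by rw [← pow_add]; exact Nat.pow_le_pow_right (by norm_num) (by omega))
    (by rw [← pow_add]; exact Nat.pow_le_pow_right (by norm_num) (by omega))
    (by rw [← pow_add, ← pow_add, ← pow_mul]; exact Nat.pow_le_pow_right (by norm_num) (by omega))
    (by rw [← pow_one 2]; exact Nat.pow_le_pow_right (by norm_num) (by omega))
    Nat.one_le_two_pow Nat.one_le_two_pow
  obtain ⟨b, hb, hcard⟩ := h.exists_card_monoPairs_gt
    (by rwa [card_eq_two_pow_finrank, hn, hw])
  refine ⟨b, hb, ?_⟩
  calc 2 ^ (2 * a - e + n) = 2 ^ φ' * 2 ^ 2 ^ (w + 1) := by rw [← pow_add, hφ']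
    _ ≤ _ := Nat.mul_le_mul_right _ (by omega)

theorem IsMonoCosetUnion.exists_coset {c : V → ZMod 2} {W : Submodule (ZMod 2) V} {S : Finset V}
    (h : IsMonoCosetUnion c W S) {e : ℕ} (hsq : #S ^ 2 ≤ 2 ^ e * ∑ γ, #{x ∈ S | c x = γ} ^ 2)
    (hS : 2 ^ (finrank (ZMod 2) W + e) < #S) :
    ∃ (W' : Submodule (ZMod 2) V) (x₀ : V), W ≤ W' ∧
      finrank (ZMod 2) W' = finrank (ZMod 2) W + 1 ∧ ∀ z ∈ W', x₀ + z ∈ S ∧ c (x₀ + z) = c x₀ := by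
  have hlt : 2 ^ e * (2 ^ finrank (ZMod 2) W * #S) < 2 ^ e * ∑ γ, #{x ∈ S | c x = γ} ^ 2 :=
    calc 2 ^ e * (2 ^ finrank (ZMod 2) W * #S) = 2 ^ (finrank (ZMod 2) W + e) * #S := by ring
      _ < #S ^ 2 := by rw [sq]; exact Nat.mul_lt_mul_of_pos_right hS ((Nat.zero_le _).trans_lt hS)
      _ ≤ _ := hsq
  obtain ⟨b, hb, hpos⟩ :=
    h.exists_card_monoPairs_gt (t := 0) (by simpa using Nat.lt_of_mul_lt_mul_left hlt)
  obtain ⟨x₀, hx₀⟩ := card_pos.mp hpos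
  refine ⟨W ⊔ span (ZMod 2) {b}, x₀, le_sup_left, finrank_sup_span_singleton hb, fun z hz => ?_⟩
  have hz := h.sup_span b x₀ hx₀ z hz
  exact ⟨filter_subset _ _ hz.1, hz.2⟩

theorem exists_isMonoCosetUnion (c : V → ZMod 2) {j : ℕ} (hj : 2 ^ j ≤ finrank (ZMod 2) V) :
    ∃ (W : Submodule (ZMod 2) V) (S : Finset V), finrank (ZMod 2) W = j ∧
      IsMonoCosetUnion c W S ∧ 2 * Fintype.card V ≤ #S * 2 ^ 2 ^ j := by
  induction j with
  | zero =>
    refine ⟨⊥, univ, finrank_bot _ _, fun x _ w hw => ?_, by simp [card_univ, mul_comm]⟩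
    simp [(mem_bot _).mp hw]
  | succ j ih =>
    obtain ⟨W, S, hW, h, hS⟩ := ih (le_trans (Nat.pow_le_pow_right two_pos j.le_succ) hj)
    have := Nat.lt_two_pow_self (n := j)
    have hpow : 2 ^ (j + 1) = 2 * 2 ^ j := by ring
    obtain ⟨b, hb, hcard⟩ := h.exists_step (e := 1) (a := 1) le_rfl
      (by rw [pow_one]; exact sq_card_le_two_mul_sum_sq c S) (by rwa [pow_one, hW])
      (by rw [hW]; omega) (by rw [hW]; omega) (by rw [hW]; omega)
    exact ⟨_, _, by rw [finrank_sup_span_singleton hb, hW], h.sup_span b, by simpa [hW] using hcard⟩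

theorem two_pow_add_add_le {v : ℕ} (hv : 1 ≤ v) (r : ℕ) : 2 ^ r + v + r ≤ 2 ^ (v + r) := by
  have hv' := Nat.lt_two_pow_self (n := v)
  have hr := Nat.lt_two_pow_self (n := r)
  rw [pow_add]
  nlinarith

theorem IsMonoCosetUnion.exists_invariant_subset {W₀ : Submodule (ZMod 2) V} {S₀ : Finset V}
    (h₀ : IsMonoCosetUnion 0 W₀ S₀) (hW₀ : 1 ≤ finrank (ZMod 2) W₀)
    (hS₀ : 2 * Fintype.card V ≤ #S₀ * 2 ^ 2 ^ finrank (ZMod 2) W₀) {r : ℕ}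
    (hr : 2 ^ (finrank (ZMod 2) W₀ + r) + (finrank (ZMod 2) W₀ + r) ≤
      finrank (ZMod 2) V + 2 ^ r) :
    ∃ (W : Submodule (ZMod 2) V) (S : Finset V), W₀ ≤ W ∧ S ⊆ S₀ ∧
      finrank (ZMod 2) W = finrank (ZMod 2) W₀ + r ∧ IsMonoCosetUnion 0 W S ∧
      2 ^ 2 ^ r * Fintype.card V ≤ #S * 2 ^ 2 ^ (finrank (ZMod 2) W₀ + r) := by
  induction r with
  | zero => exact ⟨W₀, S₀, le_rfl, Subset.rfl, rfl, h₀, by simpa using hS₀⟩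
  | succ r ih =>
    set v := finrank (ZMod 2) W₀
    have hpow : 2 ^ (r + 1) = 2 * 2 ^ r := by ring
    have hpow' : 2 ^ (v + (r + 1)) = 2 * 2 ^ (v + r) := by ring
    have hle : 2 ^ r ≤ 2 ^ (v + r) := Nat.pow_le_pow_right two_pos (by omega)
    have := two_pow_add_add_le hW₀ r
    obtain ⟨W, S, hW₀W, hSS₀, hW, h, hS⟩ := ih (by omega)
    obtain ⟨b, hb, hcard⟩ := h.exists_step (e := 0) (a := 2 ^ r) (Nat.zero_le _)
      (by rw [pow_zero, one_mul, sum_sq_card_filter_zero])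
      (by rwa [hW]) (by rw [hW]; omega) (by rw [hW]; omega) (by rw [hW]; omega)
    refine ⟨_, _, hW₀W.trans le_sup_left, (filter_subset _ _).trans hSS₀,
      by rw [finrank_sup_span_singleton hb, hW, add_assoc], h.sup_span b, ?_⟩
    rwa [hW, Nat.sub_zero, ← pow_succ', add_assoc] at hcard

end MonoCosets

theorem Submodule.le_of_coset_subset {K M : Type*} [Ring K] [AddCommGroup M] [Module K M]
    {U W : Submodule K M} {u x : M}
    (h : (fun z => u + z) '' (U : Set M) ⊆ (fun w => x + w) '' (W : Set M)) : U ≤ W := by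
  obtain ⟨w₀, hw₀, hu⟩ := h ⟨0, U.zero_mem, add_zero u⟩
  intro z hz
  obtain ⟨w₁, hw₁, huz⟩ := h ⟨z, hz, rfl⟩
  have : z = w₁ - w₀ := by
    simp only at hu huz
    rw [← add_sub_add_left_eq_sub w₁ w₀ x, huz, hu, add_sub_cancel_left]
  exact this ▸ W.sub_mem hw₁ hw₀

theorem flatSum_eq_zero_of_add_invariant {n : ℕ} {f : BF n} {A : Set (Fin n → ZMod 2)}
    {v : Fin n → ZMod 2} (hv : v ≠ 0) (hA : ∀ x ∈ A, x + v ∈ A)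
    (hf : ∀ x ∈ A, f (x + v) = f x) : flatSum f A = 0 := by
  refine sum_involution (fun x _ => x + v) (fun x hx => ?_) (fun x _ _ => by simpa using hv)
    (fun x hx => ?_) (fun x _ => by rw [add_assoc, ZModModule.add_self, add_zero])
  · rw [hf x ((Set.Finite.mem_toFinset _).mp hx), ZModModule.add_self]
  · simpa using hA x ((Set.Finite.mem_toFinset _).mp hx)

theorem degLE_coset_of_add_invariant {n d : ℕ} (f : BF n)
    {U W : Submodule (ZMod 2) (Fin n → ZMod 2)} (hUW : U ≤ W) (x₀ : Fin n → ZMod 2)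
    (hdim : finrank (ZMod 2) W ≤ finrank (ZMod 2) U + d)
    (hf : ∀ z ∈ W, ∀ u ∈ U, f (x₀ + z + u) = f (x₀ + z)) :
    DegLE f ((fun w => x₀ + w) '' (W : Set (Fin n → ZMod 2))) d := by
  rintro _ ⟨B, u, hB, rfl⟩ hBW
  have hBW' := le_of_coset_subset hBW
  obtain ⟨v, hv, hv0⟩ : ∃ v ∈ B ⊓ U, v ≠ 0 := by
    refine exists_mem_ne_zero_of_ne_bot fun hbot => ?_
    have := finrank_sup_add_finrank_inf_eq B U
    have := finrank_mono (sup_le hBW' hUW)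
    rw [hbot, finrank_bot] at *
    omega
  refine flatSum_eq_zero_of_add_invariant hv0 ?_ fun x hx => ?_
  · rintro _ ⟨z, hz, rfl⟩
    exact ⟨z + v, B.add_mem hz hv.1, (add_assoc u z v).symm⟩
  · obtain ⟨z, hz, rfl⟩ := hBW hx
    exact hf z hz v hv.2

theorem two_pow_add_two_pow_le (a b : ℕ) : 2 ^ a + 2 ^ b ≤ 2 ^ (a + b) + 1 := by
  have ha := Nat.one_le_two_pow (n := a)
  have hb := Nat.one_le_two_pow (n := b)
  rw [pow_add]
  nlinarith

theorem exists_isFlat_degLE_zero {n k : ℕ} (hk : 1 ≤ k) (hn : 2 ^ (k - 1) + k ≤ n) (f : BF n) :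
    ∃ A : Set (Fin n → ZMod 2), IsFlat A k ∧ DegLE f A 0 := by
  have hpow : 2 ^ k = 2 * 2 ^ (k - 1) := by rw [← pow_succ']; congr 1; omega
  have hk' := Nat.lt_two_pow_self (n := k)
  obtain ⟨W, S, hW, h, hS⟩ :=
    exists_isMonoCosetUnion f (j := k - 1) (by rw [finrank_fin_fun]; omega)
  have hSk : 2 ^ (k - 1 + 1) < #S := by
    rw [Fintype.card_fun, ZMod.card, Fintype.card_fin, ← pow_succ'] at hS
    calc 2 ^ (k - 1 + 1) < 2 ^ (k + 1) := Nat.pow_lt_pow_right (by norm_num) (by omega)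
      _ ≤ #S := two_pow_le_of_two_pow_add_le <| hS.trans' <| Nat.pow_le_pow_right two_pos (by omega)
  obtain ⟨W', x₀, -, hW', hconst⟩ := h.exists_coset (e := 1)
    (by rw [pow_one]; exact sq_card_le_two_mul_sum_sq f S) (by rwa [hW])
  refine ⟨_, ⟨W', x₀, by omega, rfl⟩, degLE_coset_of_add_invariant f le_rfl x₀ le_rfl ?_⟩
  intro z hz u hu
  rw [add_assoc, (hconst _ (add_mem hz hu)).2, (hconst z hz).2]

theorem exists_isFlat_degLE_of_pos {n k d : ℕ} (hd : 1 ≤ d) (hdk : d < k)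
    (hn : 2 ^ (k - 1) + k ≤ n + 2 ^ (d - 1)) (f : BF n) :
    ∃ A : Set (Fin n → ZMod 2), IsFlat A k ∧ DegLE f A d := by
  have hkd : k - d + (d - 1) = k - 1 := by omega
  have hpow := two_pow_add_two_pow_le (k - d) (d - 1)
  rw [hkd] at hpow
  obtain ⟨V₁, S₁, hV₁, h₁, hS₁⟩ := exists_isMonoCosetUnion f (j := k - d)
    (by rw [finrank_fin_fun]; omega)
  obtain ⟨W, S, hV₁W, hSS₁, hW, h, hS⟩ := h₁.zero.exists_invariant_subset (by omega)
    (by rwa [hV₁]) (r := d - 1) (by rw [hV₁, finrank_fin_fun, hkd]; omega)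
  rw [hV₁, hkd] at hW hS
  have hSk : 2 ^ (k - 1 + 0) < #S := by
    rw [Fintype.card_fun, ZMod.card, Fintype.card_fin, ← pow_add] at hS
    calc 2 ^ (k - 1 + 0) < 2 ^ k := Nat.pow_lt_pow_right (by norm_num) (by omega)
      _ ≤ #S := two_pow_le_of_two_pow_add_le <| hS.trans' <| Nat.pow_le_pow_right two_pos (by omega)
  obtain ⟨W', x₀, hWW', hW', hx₀⟩ := h.exists_coset (e := 0)
    (by rw [pow_zero, one_mul, sum_sq_card_filter_zero]) (by rwa [hW])
  refine ⟨_, ⟨W', x₀, by omega, rfl⟩,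
    degLE_coset_of_add_invariant f (hV₁W.trans hWW') x₀ (by omega) fun z hz u hu => ?_⟩
  exact (h₁ _ (hSS₁ (hx₀ z hz).1) u hu).2

theorem exists_isFlat_degLE {n k d : ℕ} (hdk : d < k)
    (hn : 2 ^ (k - 1) + k - (if d = 0 then 0 else 2 ^ (d - 1)) ≤ n) (f : BF n) :
    ∃ A : Set (Fin n → ZMod 2), IsFlat A k ∧ DegLE f A d := by
  rcases Nat.eq_zero_or_pos d with rfl | hd
  · exact exists_isFlat_degLE_zero hdk (by simpa using hn) f
  · rw [if_neg hd.ne'] at hn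
    exact exists_isFlat_degLE_of_pos hd hdk (by omega) f

/-- For `k > d ≥ 0` and `n ≥ 2^(k-1) + k - ⌊2^(d-1)⌋`, every Boolean function on
`𝔽₂ⁿ` has degree at most `d` on some `k`-dimensional flat; i.e. `g(n,k) ≤ d`. -/
theorem stmt18 {n k d : ℕ} (hdk : d < k)
    (hn : 2 ^ (k - 1) + k - (if d = 0 then 0 else 2 ^ (d - 1)) ≤ n) :
    (∀ f : BF n, ∃ A : Set (Fin n → ZMod 2), IsFlat A k ∧ degOn f A ≤ d) ∧
    gdeg n k ≤ d := by
  have hflat := exists_isFlat_degLE hdk hn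
  have hdeg : ∀ f : BF n, ∃ A : Set (Fin n → ZMod 2), IsFlat A k ∧ degOn f A ≤ d :=
    fun f => (hflat f).imp fun A hA => ⟨hA.1, Nat.sInf_le hA.2⟩
  refine ⟨hdeg, csSup_le ⟨_, 0, rfl⟩ ?_⟩
  rintro _ ⟨f, rfl⟩
  obtain ⟨A, hA, hA'⟩ := hdeg f
  exact (Nat.sInf_le (s := {d | ∃ A, IsFlat A k ∧ degOn f A = d}) ⟨A, hA, rfl⟩).trans hA'
end
end
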